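/- arXiv:2405.18201 — 2 statements merged into one kernel-verified Lean document; each statement's English description precedes it below -/
import Mathlib

section
/- Let k be an infinite field, d a natural number, and f ∈ k[x, y] a homogeneous polynomial of degree d in two variables. Then f satisfies f(x, y + t·x) = f(x, y) (as polynomials) for every t ∈ k if and only if f = c·x^d for some c ∈ k. In particular, the k-subspace of homogeneous degree-d forms invariant under all such substitutions is one-dimensional when f is allowed to range over scalars c ≠ 0. -/
/-!
Evaluating the invariance at `(1, 0)` gives `f(1, t) = f(1, 0) =: c` for every `t`. By
homogeneity `f(u, v) = u^d f(1, v/u) = c u^d` whenever `u ≠ 0`, and a polynomial identity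
holding off a line holds everywhere over an infinite field.
-/

open MvPolynomial

namespace MvPolynomial

theorem IsHomogeneous.eval_smul {R σ : Type*} [CommSemiring R] {φ : MvPolynomial σ R} {n : ℕ}
    (hφ : φ.IsHomogeneous n) (r : R) (x : σ → R) :
    eval (r • x) φ = r ^ n * eval x φ := by
  rw [φ.as_sum, map_sum, map_sum, Finset.mul_sum]
  refine Finset.sum_congr rfl fun m hm => ?_
  simp only [eval_monomial, Finsupp.prod, Pi.smul_apply, smul_eq_mul, mul_pow,
    Finset.prod_mul_distrib, Finset.prod_pow_eq_pow_sum, ← hφ.degree_eq_sum_deg_support hm]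
  ring

theorem eval_bind₁_shear {R : Type*} [CommSemiring R] (t : R) (x : Fin 2 → R)
    (f : MvPolynomial (Fin 2) R) :
    eval x (bind₁ ![X 0, X 1 + C t * X 0] f) = eval ![x 0, x 1 + t * x 0] f := by
  change eval₂Hom (RingHom.id R) x _ = _
  rw [eval₂Hom_bind₁]
  change eval _ f = eval _ f
  congr 2 with i
  fin_cases i <;> simp

theorem IsHomogeneous.eq_C_mul_X_pow_of_eval_one_eq {k : Type*} [Field k] [Infinite k]
    {f : MvPolynomial (Fin 2) k} {d : ℕ} (hf : f.IsHomogeneous d) {c : k}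
    (h : ∀ w : k, eval ![1, w] f = c) : f = C c * X 0 ^ d := by
  have eval_eq : ∀ x : Fin 2 → k, x 0 ≠ 0 → eval x f = c * x 0 ^ d := fun x hx => by
    have hx_smul : x = x 0 • ![1, x 1 / x 0] := by
      funext i
      fin_cases i <;> simp [mul_div_cancel₀ _ hx]
    rw [hx_smul, hf.eval_smul, h, mul_comm]
    simp
  -- Multiplying by `X 0` makes both sides agree on the line `x 0 = 0` as well.
  refine mul_left_cancel₀ (X_ne_zero (0 : Fin 2)) (MvPolynomial.funext fun x => ?_)
  by_cases hx : x 0 = 0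
  · simp [hx]
  · simp [eval_eq x hx]

end MvPolynomial

/-- Over an infinite field, a homogeneous form `f` of degree `d` in two variables is
invariant under all substitutions `(x, y) ↦ (x, y + t·x)` iff `f = c·x^d`. -/
theorem homogeneous_translation_invariant_iff
    (k : Type*) [Field k] [Infinite k] (d : ℕ)
    (f : MvPolynomial (Fin 2) k) (hf : f.IsHomogeneous d) :
    (∀ t : k, MvPolynomial.bind₁ ![X 0, X 1 + C t * X 0] f = f) ↔
      ∃ c : k, f = C c * X 0 ^ d := by
  constructor
  · intro h
    refine ⟨eval ![1, 0] f, hf.eq_C_mul_X_pow_of_eval_one_eq fun w => ?_⟩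
    simpa [eval_bind₁_shear] using congrArg (eval ![1, 0]) (h w)
  · rintro ⟨c, rfl⟩ t
    simp
end

section
/- Let G be a nilpotent group and U a proper subgroup of G. Let Z(U) denote the center of U regarded as a subgroup of G (i.e., the set of u ∈ U commuting with every element of U). Then the normalizer of Z(U) in G strictly contains U. -/
/-
Conjugation by an element of `N(U)` permutes `U`, hence also the elements commuting with all of
`U`, so `N(U) ≤ N(Z(U))`; and in a nilpotent group every proper subgroup satisfies `U < N(U)`.
-/

namespace Subgroup

variable {G : Type*} [Group G]

theorem conj_mem_centralizer_of_mem_normalizer {s : Set G} {g x : G} (hg : g ∈ normalizer s)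
    (hx : x ∈ centralizer s) : g * x * g⁻¹ ∈ centralizer s := by
  intro y hy
  have hxy : (g⁻¹ * y * g) * x = x * (g⁻¹ * y * g) := hx _ ((mem_set_normalizer_iff''.1 hg y).1 hy)
  calc y * (g * x * g⁻¹) = g * ((g⁻¹ * y * g) * x) * g⁻¹ := by group
    _ = g * (x * (g⁻¹ * y * g)) * g⁻¹ := by rw [hxy]
    _ = g * x * g⁻¹ * y := by group

theorem normalizer_le_normalizer_centralizer (s : Set G) :
    normalizer s ≤ normalizer (centralizer s : Set G) := fun g hg x =>
  ⟨conj_mem_centralizer_of_mem_normalizer hg, fun hx => by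
    simpa [mul_assoc] using conj_mem_centralizer_of_mem_normalizer (inv_mem hg) hx⟩

theorem normalizer_le_normalizer_inf_centralizer (H : Subgroup G) :
    normalizer (H : Set G) ≤ normalizer ((H ⊓ centralizer (H : Set G) : Subgroup G) : Set G) :=
  le_inf le_rfl (normalizer_le_normalizer_centralizer (H : Set G)) |>.trans
    inf_normalizer_le_normalizer_inf

end Subgroup

/-- In a nilpotent group, the normalizer of the center of a proper subgroup `U`
strictly contains `U`. -/
theorem normalizer_center_of_proper_subgroup_lt
    (G : Type*) [Group G] [Group.IsNilpotent G]
    (U : Subgroup G) (hU : U ≠ ⊤) :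
    U < Subgroup.normalizer ((U ⊓ Subgroup.centralizer (U : Set G) : Subgroup G) : Set G) :=
  (Group.normalizerCondition_of_isNilpotent U hU.lt_top).trans_le
    (Subgroup.normalizer_le_normalizer_inf_centralizer U)
end
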